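/- arXiv:2404.15296 — 3 statements merged into one kernel-verified Lean document; each statement's English description precedes it below -/
import Mathlib

section
/- Let (g_k) be a sequence of continuous functions ℝ^d → ℝ^m converging (in a topology making the evaluation map (g,h) ↦ g(h) continuous, e.g., locally uniform convergence) to g₀, let R : ℝ^d → ℝ_{≥0} ∪ {+∞} be proper, lower semi-continuous and coercive, λ > 0, and suppose h_k minimizes h ↦ ‖g_k(h) − u‖² + λR(h). If (h_k) is bounded and h_{k_j} → h₀ along a subsequence, then h₀ minimizes h ↦ ‖g₀(h) − u‖² + λR(h). -/
set_option maxHeartbeats 1000000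


open Filter
open scoped ENNReal


private lemma ennreal_liminf_add_liminf_le {u v : ℕ → ℝ≥0∞} :
    Filter.liminf u Filter.atTop + Filter.liminf v Filter.atTop ≤
      Filter.liminf (fun x => u x + v x) Filter.atTop := by
  rcases eq_or_ne (Filter.liminf u Filter.atTop) 0 with h0 | h0
  · rw [h0, zero_add]
    exact Filter.liminf_le_liminf (Filter.Eventually.of_forall fun x => le_add_self)
  rcases eq_or_ne (Filter.liminf v Filter.atTop) 0 with h0' | h0'
  · rw [h0', add_zero]
    exact Filter.liminf_le_liminf (Filter.Eventually.of_forall fun x => le_self_add)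
  rw [← not_lt]
  intro hc
  obtain ⟨a', ha', b', hb', hcab⟩ := ENNReal.exists_lt_add_of_lt_add hc h0 h0'
  have hle : a' + b' ≤ Filter.liminf (fun x => u x + v x) Filter.atTop := by
    rw [Filter.le_liminf_iff]
    intro y hy
    filter_upwards [Filter.eventually_lt_of_lt_liminf ha',
      Filter.eventually_lt_of_lt_liminf hb'] with x hx1 hx2
    exact hy.trans_le (add_le_add hx1.le hx2.le)
  exact absurd (hle.trans_lt hcab) (lt_irrefl _)

/-- If `g k → g₀` locally uniformly, `h k` minimizes `h ↦ ‖g k h − u‖² + λ R h`,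
the sequence `(h k)` is bounded and a subsequence `h (φ j)` converges to `h₀`,
then `h₀` minimizes `h ↦ ‖g₀ h − u‖² + λ R h`. -/
theorem limit_of_minimizers_is_minimizer {d m : ℕ}
    (R : EuclideanSpace ℝ (Fin d) → ℝ≥0∞)
    (hproper : ∃ h, R h ≠ ⊤)
    (hlsc : LowerSemicontinuous R)
    (hcoercive : Tendsto R (cocompact (EuclideanSpace ℝ (Fin d))) atTop)
    (lam : ℝ) (hlam : 0 < lam)
    (u : EuclideanSpace ℝ (Fin m))
    (g : ℕ → EuclideanSpace ℝ (Fin d) → EuclideanSpace ℝ (Fin m))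
    (hgcont : ∀ k, Continuous (g k))
    (g₀ : EuclideanSpace ℝ (Fin d) → EuclideanSpace ℝ (Fin m))
    (hconv : TendstoLocallyUniformly g g₀ atTop)
    (hk : ℕ → EuclideanSpace ℝ (Fin d))
    (hmin : ∀ k, ∀ h : EuclideanSpace ℝ (Fin d),
      ENNReal.ofReal (‖g k (hk k) - u‖ ^ 2) + ENNReal.ofReal lam * R (hk k) ≤
        ENNReal.ofReal (‖g k h - u‖ ^ 2) + ENNReal.ofReal lam * R h)
    (hbdd : Bornology.IsBounded (Set.range hk))
    (φ : ℕ → ℕ) (hφ : StrictMono φ)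
    (h₀ : EuclideanSpace ℝ (Fin d))
    (hlim : Tendsto (hk ∘ φ) atTop (nhds h₀)) :
    ∀ h : EuclideanSpace ℝ (Fin d),
      ENNReal.ofReal (‖g₀ h₀ - u‖ ^ 2) + ENNReal.ofReal lam * R h₀ ≤
        ENNReal.ofReal (‖g₀ h - u‖ ^ 2) + ENNReal.ofReal lam * R h := by
  intro h
  have hg₀cont : Continuous g₀ :=
    hconv.continuous (Eventually.of_forall hgcont).frequently
  -- the subsequence evaluation converges: g (φ j) (hk (φ j)) → g₀ h₀
  have heval : Tendsto (fun j => g (φ j) (hk (φ j))) atTop (nhds (g₀ h₀)) := by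
    have hsub : TendstoLocallyUniformly (fun j => g (φ j)) g₀ atTop := by
      intro v hv x
      obtain ⟨t, ht, hn⟩ := hconv v hv x
      exact ⟨t, ht, hφ.tendsto_atTop.eventually hn⟩
    exact hsub.tendsto_comp hg₀cont.continuousAt hlim
  -- pointwise convergence at h
  have hpt : Tendsto (fun j => g (φ j) h) atTop (nhds (g₀ h)) :=
    ((tendstoLocallyUniformlyOn_univ.2 hconv).tendsto_at (Set.mem_univ h)).comp
      hφ.tendsto_atTop
  set A : ℕ → ℝ≥0∞ := fun j =>
    ENNReal.ofReal (‖g (φ j) (hk (φ j)) - u‖ ^ 2) + ENNReal.ofReal lam * R (hk (φ j))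
  set B : ℕ → ℝ≥0∞ := fun j =>
    ENNReal.ofReal (‖g (φ j) h - u‖ ^ 2) + ENNReal.ofReal lam * R h
  have hAB : ∀ j, A j ≤ B j := fun j => hmin (φ j) h
  -- B converges to the RHS
  have hBlim : Tendsto B atTop
      (nhds (ENNReal.ofReal (‖g₀ h - u‖ ^ 2) + ENNReal.ofReal lam * R h)) := by
    apply Tendsto.add _ tendsto_const_nhds
    exact (ENNReal.continuous_ofReal.tendsto _).comp
      (((hpt.sub tendsto_const_nhds).norm).pow 2)
  -- first term of A converges
  have hA1 : Tendsto (fun j => ENNReal.ofReal (‖g (φ j) (hk (φ j)) - u‖ ^ 2)) atTop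
      (nhds (ENNReal.ofReal (‖g₀ h₀ - u‖ ^ 2))) :=
    (ENNReal.continuous_ofReal.tendsto _).comp
      (((heval.sub tendsto_const_nhds).norm).pow 2)
  -- lower semicontinuity of R along the subsequence
  have hRliminf : R h₀ ≤ liminf (fun j => R (hk (φ j))) atTop := by
    rw [le_liminf_iff]
    intro y hy
    exact hlim.eventually (hlsc h₀ y hy)
  have hLB : ENNReal.ofReal (‖g₀ h₀ - u‖ ^ 2) + ENNReal.ofReal lam * R h₀ ≤
      liminf A atTop := by
    calc ENNReal.ofReal (‖g₀ h₀ - u‖ ^ 2) + ENNReal.ofReal lam * R h₀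
        ≤ liminf (fun j => ENNReal.ofReal (‖g (φ j) (hk (φ j)) - u‖ ^ 2)) atTop +
          liminf (fun j => ENNReal.ofReal lam * R (hk (φ j))) atTop := by
          gcongr
          · exact hA1.liminf_eq.ge
          · calc ENNReal.ofReal lam * R h₀
                ≤ liminf (fun _ : ℕ => ENNReal.ofReal lam) atTop *
                  liminf (fun j => R (hk (φ j))) atTop := by
                  rw [liminf_const]; gcongr
              _ ≤ liminf (fun j => ENNReal.ofReal lam * R (hk (φ j))) atTop :=
                  ENNReal.le_liminf_mul
      _ ≤ liminf A atTop := ennreal_liminf_add_liminf_le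
  calc ENNReal.ofReal (‖g₀ h₀ - u‖ ^ 2) + ENNReal.ofReal lam * R h₀
      ≤ liminf A atTop := hLB
    _ ≤ liminf B atTop := liminf_le_liminf (Eventually.of_forall hAB)
    _ = _ := hBlim.liminf_eq
end

section
/- Let w ∈ ℝ^d with w_i > 0 and H ∈ ℝ_{≥0}^{d×n}. Then the matrix B = diag((HHᵀw)/w) − HHᵀ is positive semi-definite, where division is componentwise. -/
open Matrix Finset

/-- Lee–Seung lemma: for `w > 0` and nonnegative `H`, the matrix
`diag((HHᵀw)/w) − HHᵀ` is positive semi-definite. -/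
theorem lee_seung_posSemidef {d n : ℕ}
    (w : Fin d → ℝ) (hw : ∀ i, 0 < w i)
    (H : Matrix (Fin d) (Fin n) ℝ) (hH : ∀ i j, 0 ≤ H i j) :
    (Matrix.diagonal (fun i => (H * Hᵀ).mulVec w i / w i) - H * Hᵀ).PosSemidef := by
  set A := H * Hᵀ with hA
  have hAsymm : ∀ i j, A i j = A j i := by
    intro i j
    simp [hA, Matrix.mul_apply, Matrix.transpose_apply, mul_comm]
  have hAnn : ∀ i j, 0 ≤ A i j := by
    intro i j
    simp only [hA, Matrix.mul_apply, Matrix.transpose_apply]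
    exact Finset.sum_nonneg fun k _ => mul_nonneg (hH i k) (hH j k)
  rw [Matrix.posSemidef_iff_dotProduct_mulVec]
  constructor
  · have hAT : Aᵀ = A := by ext i j; exact hAsymm j i
    show (Matrix.diagonal _ - A)ᴴ = _
    ext i j
    simp only [Matrix.conjTranspose_apply, Matrix.sub_apply, Matrix.diagonal_apply,
      star_sub, star_trivial]
    rcases eq_or_ne i j with h | h
    · subst h; simp
    · simp [h, Ne.symm h, hAsymm i j]
  · intro x
    have hx : (star x) = x := by ext i; simp
    show (0:ℝ) ≤ star x ⬝ᵥ _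
    rw [hx, Matrix.sub_mulVec, dotProduct_sub]
    have lhs_eq : x ⬝ᵥ (Matrix.diagonal (fun i => A.mulVec w i / w i)).mulVec x
        - x ⬝ᵥ A.mulVec x
        = ∑ i, ∑ j, (A i j * (x i ^ 2 * w j / w i) - A i j * x i * x j) := by
      simp only [dotProduct, Matrix.mulVec_diagonal]
      simp only [Matrix.mulVec, dotProduct, ← Finset.sum_sub_distrib]
      refine Finset.sum_congr rfl fun i _ => ?_
      rw [Finset.sum_div, Finset.sum_mul, Finset.mul_sum, Finset.mul_sum,
        ← Finset.sum_sub_distrib]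
      refine Finset.sum_congr rfl fun j _ => ?_
      have := (hw i).ne'
      field_simp
    rw [lhs_eq]
    have key : ∀ i j, A i j * w i * w j * (x i / w i - x j / w j)^2
        = A i j * (x i ^ 2 * w j / w i) + A i j * (x j ^ 2 * w i / w j)
          - 2 * (A i j * x i * x j) := by
      intro i j
      have hwi := (hw i).ne'
      have hwj := (hw j).ne'
      field_simp
      ring
    have swap : ∑ i, ∑ j, A i j * (x j ^ 2 * w i / w j)
        = ∑ i, ∑ j, A i j * (x i ^ 2 * w j / w i) := by
      rw [Finset.sum_comm]
      exact Finset.sum_congr rfl fun j _ => Finset.sum_congr rfl fun i _ => by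
        rw [hAsymm i j]
    have main : (2:ℝ) * ∑ i, ∑ j, (A i j * (x i ^ 2 * w j / w i) - A i j * x i * x j)
        = ∑ i, ∑ j, A i j * w i * w j * (x i / w i - x j / w j)^2 := by
      simp only [key, Finset.sum_sub_distrib, Finset.sum_add_distrib, swap,
        ← Finset.mul_sum]
      ring
    have hnn : (0:ℝ) ≤ ∑ i, ∑ j, A i j * w i * w j * (x i / w i - x j / w j)^2 := by
      refine Finset.sum_nonneg fun i _ => Finset.sum_nonneg fun j _ => ?_
      have := hAnn i j; have := (hw i).le; have := (hw j).le
      positivity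
    nlinarith [main, hnn]
end

section
/- The loss L(w) = ½‖u − wH‖² − ½‖û − wĤ‖² + ½‖ũ − wH̃‖² + γ‖w‖₁ (with w ∈ ℝ_{≥0}^d a row vector, strictly positive data) is non-increasing under the multiplicative update w ← w ⊙ (uHᵀ + ũH̃ᵀ + wĤĤᵀ)/(w(HHᵀ + H̃H̃ᵀ) + ûĤᵀ + γ). -/
open Matrix Finset


lemma two_mul_le' (x y p q : ℝ) (hp : 0 < p) (hq : 0 < q) :
    2*(x*y) ≤ (q/p)*x^2 + (p/q)*y^2 := by
  rw [div_mul_eq_mul_div, div_mul_eq_mul_div,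
    div_add_div _ _ (ne_of_gt hp) (ne_of_gt hq), le_div_iff₀ (mul_pos hp hq)]
  nlinarith [sq_nonneg (q*x - p*y)]

lemma key_quad {ι : Type*} (S : Finset ι) (w δ : ι → ℝ) (Q : ι → ι → ℝ)
    (hsym : ∀ i j, Q i j = Q j i) (hQ : ∀ i j, 0 ≤ Q i j) (hwS : ∀ i ∈ S, 0 < w i) :
    ∑ i ∈ S, ∑ j ∈ S, δ i * Q i j * δ j ≤
      ∑ i ∈ S, δ i ^ 2 * (∑ j ∈ S, w j * Q i j) / w i := by
  have step : ∑ i ∈ S, ∑ j ∈ S, δ i * Q i j * δ j ≤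
      ∑ i ∈ S, ∑ j ∈ S, Q i j * ((w j / w i) * δ i ^ 2 + (w i / w j) * δ j ^ 2) / 2 := by
    apply Finset.sum_le_sum; intro i hi
    apply Finset.sum_le_sum; intro j hj
    have h := two_mul_le' (δ i) (δ j) (w i) (w j) (hwS i hi) (hwS j hj)
    have h2 := mul_le_mul_of_nonneg_left h (hQ i j)
    nlinarith [h2]
  refine step.trans (le_of_eq ?_)
  have swap : ∑ i ∈ S, ∑ j ∈ S, Q i j * ((w i / w j) * δ j ^ 2) =
      ∑ i ∈ S, ∑ j ∈ S, Q i j * ((w j / w i) * δ i ^ 2) := by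
    rw [Finset.sum_comm]
    apply Finset.sum_congr rfl; intro i _
    apply Finset.sum_congr rfl; intro j _
    rw [hsym i j]
  calc ∑ i ∈ S, ∑ j ∈ S, Q i j * ((w j / w i) * δ i ^ 2 + (w i / w j) * δ j ^ 2) / 2
      = (∑ i ∈ S, ∑ j ∈ S, Q i j * ((w j / w i) * δ i ^ 2)
        + ∑ i ∈ S, ∑ j ∈ S, Q i j * ((w i / w j) * δ j ^ 2)) / 2 := by
        rw [← Finset.sum_add_distrib]
        rw [Finset.sum_div]
        apply Finset.sum_congr rfl; intro i _
        rw [← Finset.sum_add_distrib, Finset.sum_div]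
        apply Finset.sum_congr rfl; intro j _
        ring
    _ = ∑ i ∈ S, ∑ j ∈ S, Q i j * ((w j / w i) * δ i ^ 2) := by rw [swap]; ring
    _ = ∑ i ∈ S, δ i ^ 2 * (∑ j ∈ S, w j * Q i j) / w i := by
        apply Finset.sum_congr rfl; intro i _
        rw [Finset.mul_sum, Finset.sum_div]
        apply Finset.sum_congr rfl; intro j _
        ring

lemma sum_vecMul_mul_vecMul {d n : ℕ} (M : Matrix (Fin d) (Fin n) ℝ) (x y : Fin d → ℝ) :
    ∑ j, M.vecMul x j * M.vecMul y j = ∑ i, y i * (M * Mᵀ).vecMul x i := by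
  have h : (M.vecMul x) ⬝ᵥ (M.vecMul y) = ((M * Mᵀ).vecMul x) ⬝ᵥ y := by
    rw [show M.vecMul y = Mᵀ.mulVec y from (Matrix.mulVec_transpose M y).symm,
      Matrix.dotProduct_mulVec, Matrix.vecMul_vecMul]
  simp only [dotProduct] at h
  rw [h]
  exact Finset.sum_congr rfl fun i _ => mul_comm _ _

lemma sum_mul_vecMul {d n : ℕ} (M : Matrix (Fin d) (Fin n) ℝ) (v : Fin n → ℝ) (y : Fin d → ℝ) :
    ∑ j, v j * M.vecMul y j = ∑ i, y i * M.mulVec v i := by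
  have h : v ⬝ᵥ (M.vecMul y) = (M.mulVec v) ⬝ᵥ y := by
    rw [show M.vecMul y = Mᵀ.mulVec y from (Matrix.mulVec_transpose M y).symm,
      Matrix.dotProduct_mulVec, Matrix.vecMul_transpose]
  simp only [dotProduct] at h
  rw [h]
  exact Finset.sum_congr rfl fun i _ => mul_comm _ _

lemma loss_diff {d n : ℕ} (M : Matrix (Fin d) (Fin n) ℝ) (v : Fin n → ℝ) (w δ : Fin d → ℝ) :
    ∑ j, (v j - M.vecMul (w + δ) j) ^ 2
      = ∑ j, (v j - M.vecMul w j) ^ 2 + ∑ j, (M.vecMul δ j) ^ 2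
        + 2 * ∑ i, δ i * (M * Mᵀ).vecMul w i - 2 * ∑ i, δ i * M.mulVec v i := by
  rw [← sum_vecMul_mul_vecMul, ← sum_mul_vecMul]
  rw [Matrix.add_vecMul]
  rw [Finset.mul_sum, Finset.mul_sum, ← Finset.sum_add_distrib, ← Finset.sum_add_distrib,
    ← Finset.sum_sub_distrib]
  exact Finset.sum_congr rfl fun j _ => by simp only [Pi.add_apply]; ring

/-- The D+MDNMF loss. Here `w` is a row vector, `wH` is computed via `vecMul`. -/
noncomputable def dmdnmfLoss {d n : ℕ} (u uhat util : Fin n → ℝ)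
    (H Hhat Htil : Matrix (Fin d) (Fin n) ℝ) (γ : ℝ) (w : Fin d → ℝ) : ℝ :=
  (1 / 2) * ∑ j, (u j - H.vecMul w j) ^ 2
    - (1 / 2) * ∑ j, (uhat j - Hhat.vecMul w j) ^ 2
    + (1 / 2) * ∑ j, (util j - Htil.vecMul w j) ^ 2
    + γ * ∑ i, |w i|

lemma dmdnmf_aux {d n : ℕ}
    (w : Fin d → ℝ) (hw : ∀ i, 0 ≤ w i)
    (u uhat util : Fin n → ℝ)
    (hu : ∀ j, 0 ≤ u j) (huhat : ∀ j, 0 ≤ uhat j) (hutil : ∀ j, 0 ≤ util j)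
    (H Hhat Htil : Matrix (Fin d) (Fin n) ℝ)
    (hH : ∀ i j, 0 ≤ H i j) (hHhat : ∀ i j, 0 ≤ Hhat i j) (hHtil : ∀ i j, 0 ≤ Htil i j)
    (γ : ℝ) (hγ : 0 < γ)
    (a b w' : Fin d → ℝ)
    (hadef : ∀ i, a i = H.mulVec u i + Htil.mulVec util i + (Hhat * Hhatᵀ).vecMul w i)
    (hbdef : ∀ i, b i = (H * Hᵀ + Htil * Htilᵀ).vecMul w i + Hhat.mulVec uhat i + γ)
    (hw'def : ∀ i, w' i = w i * a i / b i) :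
    dmdnmfLoss u uhat util H Hhat Htil γ w' ≤ dmdnmfLoss u uhat util H Hhat Htil γ w := by
  classical
  set A : Matrix (Fin d) (Fin d) ℝ := H * Hᵀ + Htil * Htilᵀ with hAdef
  -- basic entrywise facts
  have hAsym : ∀ i k, A i k = A k i := by
    intro i k
    rw [hAdef]
    simp only [Matrix.add_apply, Matrix.mul_apply, Matrix.transpose_apply]
    congr 1 <;> exact Finset.sum_congr rfl fun j _ => mul_comm _ _
  have hAnn : ∀ i k, 0 ≤ A i k := by
    intro i k
    rw [hAdef]
    simp only [Matrix.add_apply, Matrix.mul_apply, Matrix.transpose_apply]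
    exact add_nonneg (Finset.sum_nonneg fun j _ => mul_nonneg (hH i j) (hH k j))
      (Finset.sum_nonneg fun j _ => mul_nonneg (hHtil i j) (hHtil k j))
  have hAhatnn : ∀ i k, 0 ≤ (Hhat * Hhatᵀ) i k := by
    intro i k
    simp only [Matrix.mul_apply, Matrix.transpose_apply]
    exact Finset.sum_nonneg fun j _ => mul_nonneg (hHhat i j) (hHhat k j)
  have hvecA : ∀ i, 0 ≤ A.vecMul w i := by
    intro i
    simp only [Matrix.vecMul, dotProduct]
    exact Finset.sum_nonneg fun k _ => mul_nonneg (hw k) (hAnn k i)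
  have hvecAhat : ∀ i, 0 ≤ (Hhat * Hhatᵀ).vecMul w i := by
    intro i
    simp only [Matrix.vecMul, dotProduct]
    exact Finset.sum_nonneg fun k _ => mul_nonneg (hw k) (hAhatnn k i)
  have hmvHhat : ∀ i, 0 ≤ Hhat.mulVec uhat i := by
    intro i
    simp only [Matrix.mulVec, dotProduct]
    exact Finset.sum_nonneg fun j _ => mul_nonneg (hHhat i j) (huhat j)
  have hmvH : ∀ i, 0 ≤ H.mulVec u i := by
    intro i
    simp only [Matrix.mulVec, dotProduct]
    exact Finset.sum_nonneg fun j _ => mul_nonneg (hH i j) (hu j)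
  have hmvHtil : ∀ i, 0 ≤ Htil.mulVec util i := by
    intro i
    simp only [Matrix.mulVec, dotProduct]
    exact Finset.sum_nonneg fun j _ => mul_nonneg (hHtil i j) (hutil j)
  have hbpos : ∀ i, 0 < b i := by
    intro i
    rw [hbdef i]
    have h1 := hvecA i
    have h2 := hmvHhat i
    linarith
  have hann : ∀ i, 0 ≤ a i := by
    intro i
    rw [hadef i]
    have := hmvH i; have := hmvHtil i; have := hvecAhat i
    linarith
  have hw'nn : ∀ i, 0 ≤ w' i := by
    intro i
    rw [hw'def i]
    exact div_nonneg (mul_nonneg (hw i) (hann i)) (hbpos i).le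
  set δ : Fin d → ℝ := fun i => w' i - w i with hδdef
  have hwδ : w + δ = w' := by funext i; simp [hδdef]
  have hδ0 : ∀ i, w i = 0 → δ i = 0 := by
    intro i h
    simp only [hδdef]
    rw [hw'def i, h]
    simp
  -- the loss difference identity
  have hLdiff : dmdnmfLoss u uhat util H Hhat Htil γ w' - dmdnmfLoss u uhat util H Hhat Htil γ w
      = ∑ i, δ i * (b i - a i)
        + (1/2) * ∑ j, (H.vecMul δ j)^2 - (1/2) * ∑ j, (Hhat.vecMul δ j)^2
        + (1/2) * ∑ j, (Htil.vecMul δ j)^2 := by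
    have e1 : ∑ j, (u j - H.vecMul w' j) ^ 2
        = ∑ j, (u j - H.vecMul w j) ^ 2 + ∑ j, (H.vecMul δ j) ^ 2
          + 2 * ∑ i, δ i * (H * Hᵀ).vecMul w i - 2 * ∑ i, δ i * H.mulVec u i := by
      rw [← hwδ]; exact loss_diff H u w δ
    have e2 : ∑ j, (uhat j - Hhat.vecMul w' j) ^ 2
        = ∑ j, (uhat j - Hhat.vecMul w j) ^ 2 + ∑ j, (Hhat.vecMul δ j) ^ 2
          + 2 * ∑ i, δ i * (Hhat * Hhatᵀ).vecMul w i - 2 * ∑ i, δ i * Hhat.mulVec uhat i := by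
      rw [← hwδ]; exact loss_diff Hhat uhat w δ
    have e3 : ∑ j, (util j - Htil.vecMul w' j) ^ 2
        = ∑ j, (util j - Htil.vecMul w j) ^ 2 + ∑ j, (Htil.vecMul δ j) ^ 2
          + 2 * ∑ i, δ i * (Htil * Htilᵀ).vecMul w i - 2 * ∑ i, δ i * Htil.mulVec util i := by
      rw [← hwδ]; exact loss_diff Htil util w δ
    have habs1 : ∑ i, |w i| = ∑ i, w i :=
      Finset.sum_congr rfl fun i _ => abs_of_nonneg (hw i)
    have habs2 : ∑ i, |w' i| = ∑ i, w i + ∑ i, δ i := by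
      rw [← Finset.sum_add_distrib]
      refine Finset.sum_congr rfl fun i _ => ?_
      rw [abs_of_nonneg (hw'nn i)]
      simp only [hδdef]
      ring
    have hsplit : ∑ i, δ i * (b i - a i)
        = ∑ i, δ i * (H * Hᵀ).vecMul w i + ∑ i, δ i * (Htil * Htilᵀ).vecMul w i
          + ∑ i, δ i * Hhat.mulVec uhat i + γ * ∑ i, δ i
          - ∑ i, δ i * H.mulVec u i - ∑ i, δ i * Htil.mulVec util i
          - ∑ i, δ i * (Hhat * Hhatᵀ).vecMul w i := by
      rw [Finset.mul_sum, ← Finset.sum_add_distrib, ← Finset.sum_add_distrib,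
        ← Finset.sum_add_distrib, ← Finset.sum_sub_distrib, ← Finset.sum_sub_distrib,
        ← Finset.sum_sub_distrib]
      refine Finset.sum_congr rfl fun i _ => ?_
      rw [hbdef i, hadef i, Matrix.vecMul_add, Pi.add_apply]
      ring
    simp only [dmdnmfLoss]
    rw [e1, e2, e3, habs1, habs2, hsplit]
    ring
  -- quadratic form rewriting
  have hC : ∀ (M : Matrix (Fin d) (Fin n) ℝ),
      ∑ j, (M.vecMul δ j)^2 = ∑ i, δ i * (M * Mᵀ).vecMul δ i := by
    intro M
    rw [← sum_vecMul_mul_vecMul M δ δ]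
    exact Finset.sum_congr rfl fun j _ => pow_two _
  have hquad : ∑ i, δ i * A.vecMul δ i
      = ∑ j, (H.vecMul δ j)^2 + ∑ j, (Htil.vecMul δ j)^2 := by
    rw [hC H, hC Htil, ← Finset.sum_add_distrib]
    refine Finset.sum_congr rfl fun i _ => ?_
    rw [hAdef, Matrix.vecMul_add, Pi.add_apply]
    ring
  -- restriction to the support of w
  set S : Finset (Fin d) := Finset.univ.filter (fun i => w i ≠ 0) with hSdef
  have hwS : ∀ i ∈ S, 0 < w i := by
    intro i hi
    rw [hSdef, Finset.mem_filter] at hi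
    exact lt_of_le_of_ne (hw i) (Ne.symm hi.2)
  have hδS : ∀ i ∉ S, δ i = 0 := by
    intro i hi
    rw [hSdef, Finset.mem_filter] at hi
    push_neg at hi
    exact hδ0 i (hi (Finset.mem_univ i))
  have hwS0 : ∀ i ∉ S, w i = 0 := by
    intro i hi
    rw [hSdef, Finset.mem_filter] at hi
    push_neg at hi
    exact hi (Finset.mem_univ i)
  have E1 : ∑ i, δ i * (b i - a i) = ∑ i ∈ S, δ i * (b i - a i) := by
    symm
    apply Finset.sum_subset (Finset.subset_univ S)
    intro i _ hi
    rw [hδS i hi, zero_mul]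
  have E2 : ∑ i, δ i * A.vecMul δ i = ∑ i ∈ S, δ i * A.vecMul δ i := by
    symm
    apply Finset.sum_subset (Finset.subset_univ S)
    intro i _ hi
    rw [hδS i hi, zero_mul]
  have hT1 : ∑ i ∈ S, δ i * (b i - a i) = ∑ i ∈ S, -(δ i ^ 2 * b i / w i) := by
    refine Finset.sum_congr rfl fun i hi => ?_
    have hwi := hwS i hi
    have hbi := hbpos i
    have hδi : δ i = w i * (a i - b i) / b i := by
      simp only [hδdef]
      rw [hw'def i]
      field_simp
    rw [hδi]
    field_simp
    ring
  have hAin : ∀ i, A.vecMul δ i = ∑ k ∈ S, δ k * A i k := by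
    intro i
    have h0 : A.vecMul δ i = ∑ k, δ k * A k i := by
      simp only [Matrix.vecMul, dotProduct]
    rw [h0]
    rw [show ∑ k, δ k * A k i = ∑ k ∈ S, δ k * A k i from
      (Finset.sum_subset (Finset.subset_univ S) fun k _ hk => by
        rw [hδS k hk, zero_mul]).symm]
    exact Finset.sum_congr rfl fun k _ => by rw [hAsym k i]
  have hAw : ∀ i, A.vecMul w i = ∑ k ∈ S, w k * A i k := by
    intro i
    have h0 : A.vecMul w i = ∑ k, w k * A k i := by
      simp only [Matrix.vecMul, dotProduct]
    rw [h0]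
    rw [show ∑ k, w k * A k i = ∑ k ∈ S, w k * A k i from
      (Finset.sum_subset (Finset.subset_univ S) fun k _ hk => by
        rw [hwS0 k hk, zero_mul]).symm]
    exact Finset.sum_congr rfl fun k _ => by rw [hAsym k i]
  have hmain2 : ∑ i, δ i * A.vecMul δ i ≤ ∑ i ∈ S, δ i ^ 2 * (A.vecMul w i) / w i := by
    rw [E2]
    calc ∑ i ∈ S, δ i * A.vecMul δ i
        = ∑ i ∈ S, ∑ k ∈ S, δ i * A i k * δ k := by
          refine Finset.sum_congr rfl fun i _ => ?_
          rw [hAin i, Finset.mul_sum]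
          exact Finset.sum_congr rfl fun k _ => by ring
      _ ≤ ∑ i ∈ S, δ i ^ 2 * (∑ k ∈ S, w k * A i k) / w i :=
          key_quad S w δ (fun i k => A i k) (fun i j => hAsym i j) (fun i j => hAnn i j) hwS
      _ = ∑ i ∈ S, δ i ^ 2 * (A.vecMul w i) / w i := by
          refine Finset.sum_congr rfl fun i _ => ?_
          rw [hAw i]
  have hfinal : ∑ i ∈ S, -(δ i ^ 2 * b i / w i)
      + (1/2) * ∑ i ∈ S, δ i ^ 2 * (A.vecMul w i) / w i ≤ 0 := by
    rw [Finset.mul_sum, ← Finset.sum_add_distrib]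
    apply Finset.sum_nonpos
    intro i hi
    have hwi := hwS i hi
    have h1 := hvecA i
    have h2 : A.vecMul w i ≤ b i := by
      rw [hbdef i]
      have := hmvHhat i
      linarith
    have hY : δ i ^ 2 * (A.vecMul w i) / w i ≤ δ i ^ 2 * b i / w i := by
      gcongr
    have hY0 : 0 ≤ δ i ^ 2 * (A.vecMul w i) / w i := by positivity
    linarith
  have hYhat : 0 ≤ ∑ j, (Hhat.vecMul δ j)^2 :=
    Finset.sum_nonneg fun j _ => sq_nonneg _
  linarith [hLdiff, hquad, hmain2, hfinal, hYhat, E1, hT1]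


/-- The D+MDNMF loss is non-increasing under the multiplicative update
`w ← w ⊙ (uHᵀ + ũH̃ᵀ + wĤĤᵀ) / (w(HHᵀ + H̃H̃ᵀ) + ûĤᵀ + γ)`. -/
theorem dmdnmf_loss_nonincreasing {d n : ℕ}
    (w : Fin d → ℝ) (hw : ∀ i, 0 ≤ w i)
    (u uhat util : Fin n → ℝ)
    (hu : ∀ j, 0 < u j) (huhat : ∀ j, 0 < uhat j) (hutil : ∀ j, 0 < util j)
    (H Hhat Htil : Matrix (Fin d) (Fin n) ℝ)
    (hH : ∀ i j, 0 < H i j) (hHhat : ∀ i j, 0 < Hhat i j) (hHtil : ∀ i j, 0 < Htil i j)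
    (γ : ℝ) (hγ : 0 < γ) :
    dmdnmfLoss u uhat util H Hhat Htil γ
      (fun i => w i *
        (H.mulVec u i + Htil.mulVec util i + (Hhat * Hhatᵀ).vecMul w i) /
        ((H * Hᵀ + Htil * Htilᵀ).vecMul w i + Hhat.mulVec uhat i + γ)) ≤
    dmdnmfLoss u uhat util H Hhat Htil γ w :=
  dmdnmf_aux w hw u uhat util (fun j => (hu j).le) (fun j => (huhat j).le)
    (fun j => (hutil j).le) H Hhat Htil (fun i j => (hH i j).le) (fun i j => (hHhat i j).le)
    (fun i j => (hHtil i j).le) γ hγ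
    (fun i => H.mulVec u i + Htil.mulVec util i + (Hhat * Hhatᵀ).vecMul w i)
    (fun i => (H * Hᵀ + Htil * Htilᵀ).vecMul w i + Hhat.mulVec uhat i + γ)
    (fun i => w i *
        (H.mulVec u i + Htil.mulVec util i + (Hhat * Hhatᵀ).vecMul w i) /
        ((H * Hᵀ + Htil * Htilᵀ).vecMul w i + Hhat.mulVec uhat i + γ))
    (fun i => rfl) (fun i => rfl) (fun i => rfl)
end
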